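/- arXiv:1210.8254 — 4 statements merged into one kernel-verified Lean document; each statement's English description precedes it below -/
import Mathlib

section
/- For any positive integer m and any nonzero complex numbers a, b with a + b = -e^{it} for some real t, there exists a nonzero complex number z satisfying (conj(z) - conj(a)) * (z - b) = z^(m+1) / conj(z)^m. -/
/-!
Writing `z = r e^{iθ}` with `r` real turns the equation into the real quadratic
`r² - r F(e^{iθ}) + ā b = 0`, where `F(w) = ā w + b w̄ + w^(2m+1)`; so one needs a `θ` for which
`F(e^{iθ})` lies on the curve `{r + ā b / r : r ∈ ℝ, r ≠ 0}`, a hyperbola when `ā b ∉ ℝ`.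
Since `F` is odd, `F(e^{iθ₀})` is real for some `θ₀`, a point between the two branches. Rotating by
`u` with `u² = ā b / |ā b|`, the condition `|a + b| = 1` makes the slow part of `ū F(e^{iθ})` small,
while the fast term `ū e^{i(2m+1)θ}` runs through a half circle on an interval of length
`π / (2m+1) ≤ π / 3`; this produces a `θ₁` where `ū F(e^{iθ₁})` is real and large, a point beyond
the curve. The intermediate value theorem between `θ₀` and `θ₁` finishes the proof.
-/

open Complex
open scoped Real

theorem Function.Antiperiodic.exists_eq_zero {g : ℝ → ℝ} {c : ℝ} (hg : Continuous g)
    (h : Function.Antiperiodic g c) : ∃ x, g x = 0 := by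
  have hmem : (0 : ℝ) ∈ Set.uIcc (g 0) (g c) := by
    rw [h.eq, Set.mem_uIcc]
    rcases le_total (g 0) 0 with h0 | h0
    · exact Or.inl ⟨h0, by linarith⟩
    · exact Or.inr ⟨by linarith, h0⟩
  obtain ⟨x, -, hx⟩ := intermediate_value_uIcc hg.continuousOn hmem
  exact ⟨x, hx⟩

theorem exists_phase_window {ν : ℝ} (hν : 3 ≤ ν) (A l : ℝ) :
    ∃ θ₁ : ℝ, ∃ k : ℤ, A ≤ θ₁ ∧ θ₁ + π / ν ≤ A + π ∧ ν * θ₁ + l = 2 * π * k - π / 2 := by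
  have hν0 : 0 < ν := by linarith
  set k : ℤ := ⌈(ν * A + l + π / 2) / (2 * π)⌉
  have hk := Int.le_ceil ((ν * A + l + π / 2) / (2 * π))
  have hk' := Int.ceil_lt_add_one ((ν * A + l + π / 2) / (2 * π))
  rw [div_le_iff₀ (by positivity)] at hk
  rw [← sub_lt_iff_lt_add, lt_div_iff₀ (by positivity)] at hk'
  refine ⟨(2 * π * k - π / 2 - l) / ν, k, ?_, ?_, by field_simp; ring⟩
  · rw [le_div_iff₀ hν0]; linarith
  · rw [← add_div, div_le_iff₀ hν0]; nlinarith [Real.pi_pos]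

theorem exists_add_sin_eq_zero_of_cos_nonneg {g : ℝ → ℝ} (hg : Continuous g)
    (hg1 : ∀ θ, |g θ| ≤ 1) {ν : ℝ} (hν : 0 < ν) {l θ₁ : ℝ} {k : ℤ}
    (hθ₁ : ν * θ₁ + l = 2 * π * k - π / 2) :
    ∃ θ ∈ Set.Icc θ₁ (θ₁ + π / ν),
      g θ + Real.sin (ν * θ + l) = 0 ∧ 0 ≤ Real.cos (ν * θ + l) := by
  have hphase : ∀ θ, ν * θ + l = ν * (θ - θ₁) - π / 2 + k * (2 * π) := fun θ => by
    linear_combination hθ₁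
  have hstart : g θ₁ + Real.sin (ν * θ₁ + l) ≤ 0 := by
    rw [hphase, sub_self, mul_zero, zero_sub, Real.sin_add_int_mul_two_pi, Real.sin_neg,
      Real.sin_pi_div_two]
    linarith [(abs_le.mp (hg1 θ₁)).2]
  have hend : 0 ≤ g (θ₁ + π / ν) + Real.sin (ν * (θ₁ + π / ν) + l) := by
    rw [hphase, add_sub_cancel_left, mul_div_cancel₀ _ hν.ne', Real.sin_add_int_mul_two_pi,
      show π - π / 2 = π / 2 by ring, Real.sin_pi_div_two]
    linarith [(abs_le.mp (hg1 (θ₁ + π / ν))).1]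
  obtain ⟨θ, ⟨hθ₁θ, hθθ₂⟩, hzero⟩ := intermediate_value_Icc (by linarith [div_pos Real.pi_pos hν])
    (by fun_prop : Continuous fun θ => g θ + Real.sin (ν * θ + l)).continuousOn ⟨hstart, hend⟩
  refine ⟨θ, ⟨hθ₁θ, hθθ₂⟩, hzero, ?_⟩
  have hwidth : ν * (θ - θ₁) ≤ π := by rw [← le_div_iff₀' hν]; linarith
  rw [hphase, Real.cos_add_int_mul_two_pi]
  exact Real.cos_nonneg_of_mem_Icc ⟨by nlinarith, by linarith⟩

theorem abs_im_mul_exp_le (D : ℂ) (θ : ℝ) : |(D * exp (θ * I)).im| ≤ ‖D‖ := by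
  simpa [norm_exp_ofReal_mul_I] using abs_im_le_norm (D * exp (θ * I))

theorem re_mul_exp_nonneg {E : ℂ} {θ : ℝ} (hθ : θ + arg E ∈ Set.Icc (-(π / 2)) (π / 2)) :
    0 ≤ (E * exp (θ * I)).re := by
  have hpolar : E * exp (θ * I) = ‖E‖ * exp ((θ + arg E : ℝ) * I) := by
    conv_lhs => rw [← norm_mul_exp_arg_mul_I E]
    push_cast; rw [mul_assoc, ← exp_add]; ring_nf
  rw [hpolar, re_ofReal_mul, exp_ofReal_mul_I_re]
  exact mul_nonneg (norm_nonneg E) (Real.cos_nonneg_of_mem_Icc hθ)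

theorem mul_exp_pow_eq_exp {lam : ℂ} (hlam : ‖lam‖ = 1) (n : ℕ) (θ : ℝ) :
    lam * exp (θ * I) ^ n = exp ((n * θ + arg lam : ℝ) * I) := by
  conv_lhs => rw [← norm_mul_exp_arg_mul_I lam, hlam]
  rw [← exp_nat_mul, ofReal_one, one_mul, ← exp_add]
  push_cast; ring_nf

/-- The window is chosen inside the half turn where `Re (E e^{iθ}) ≥ 0`, and on it the phase of
`λ e^{inθ}` runs from `-π/2` to `π/2`. -/
theorem exists_im_eq_zero_and_sq_le_re {n : ℕ} (hn : 3 ≤ n) {D : ℂ} (hD : ‖D‖ ≤ 1) (E : ℂ)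
    {lam : ℂ} (hlam : ‖lam‖ = 1) :
    ∃ θ : ℝ, (D * exp (θ * I) + lam * exp (θ * I) ^ n).im = 0 ∧
      1 - ‖D‖ ^ 2 ≤ (E * exp (θ * I) + lam * exp (θ * I) ^ n).re ^ 2 := by
  obtain ⟨θ₁, k, hA, hB, hθ₁⟩ :=
    exists_phase_window (ν := n) (by exact_mod_cast hn) (-arg E - π / 2) (arg lam)
  obtain ⟨θ, hθ, hzero, hcos⟩ := exists_add_sin_eq_zero_of_cos_nonneg
    (by fun_prop : Continuous fun θ : ℝ => (D * exp (θ * I)).im)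
    (fun θ => (abs_im_mul_exp_le D θ).trans hD) (by positivity) hθ₁
  have hE : 0 ≤ (E * exp (θ * I)).re :=
    re_mul_exp_nonneg ⟨by linarith [hθ.1], by linarith [hθ.2]⟩
  have hsin : Real.sin (n * θ + arg lam) ^ 2 ≤ ‖D‖ ^ 2 := by
    rw [← neg_eq_of_add_eq_zero_right hzero, neg_sq, ← sq_abs]
    exact pow_le_pow_left₀ (abs_nonneg _) (abs_im_mul_exp_le D θ) 2
  refine ⟨θ, ?_, ?_⟩
  · rwa [add_im, mul_exp_pow_eq_exp hlam, exp_ofReal_mul_I_im]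
  · rw [add_re, mul_exp_pow_eq_exp hlam, exp_ofReal_mul_I_re]
    nlinarith [Real.sin_sq_add_cos_sq (n * θ + arg lam)]

def HasNonzeroRealRoot (p w : ℂ) : Prop :=
  ∃ r : ℝ, r ≠ 0 ∧ (r : ℂ) ^ 2 - r * w + p = 0

theorem hasNonzeroRealRoot_of_im_eq_zero {p w : ℂ} (hp : p.im = 0) (hp0 : p.re ≠ 0)
    (hw : w.im = 0) (hdisc : 4 * p.re ≤ w.re ^ 2) : HasNonzeroRealRoot p w := by
  obtain ⟨r, hr⟩ := exists_quadratic_eq_zero (K := ℝ) (a := 1) (b := -w.re) (c := p.re)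
    one_ne_zero ⟨√(w.re ^ 2 - 4 * p.re), by rw [discrim, Real.mul_self_sqrt (by linarith)]; ring⟩
  refine ⟨r, fun hr0 => hp0 (by simpa [hr0] using hr), Complex.ext ?_ ?_⟩
  · simp only [sq, add_re, sub_re, mul_re, ofReal_re, ofReal_im, mul_zero, sub_zero, hw, zero_re]
    linarith
  · simp [sq, hw, hp]

theorem hasNonzeroRealRoot_of_im_ne_zero {p w : ℂ} (hp : p.im ≠ 0)
    (h : p.im * w.re * w.im - p.re * w.im ^ 2 = p.im ^ 2) : HasNonzeroRealRoot p w := by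
  have hw : w.im ≠ 0 := by
    rintro hw
    simp only [hw, mul_zero, sub_zero, ne_eq, OfNat.ofNat_ne_zero, not_false_eq_true,
      zero_pow] at h
    exact hp (pow_eq_zero_iff two_ne_zero |>.mp h.symm)
  refine ⟨p.im / w.im, div_ne_zero hp hw, Complex.ext ?_ ?_⟩
  · simp only [ofReal_div, sq, add_re, sub_re, mul_re, div_ofReal_re, ofReal_re, div_ofReal_im,
      ofReal_im, zero_div, mul_zero, sub_zero, zero_mul, zero_re]
    field_simp
    linear_combination -h
  · simp only [ofReal_div, sq, add_im, sub_im, mul_im, div_ofReal_re, ofReal_re, div_ofReal_im,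
      ofReal_im, zero_div, mul_zero, zero_mul, add_zero, zero_sub, zero_im]
    field_simp
    ring

theorem sq_im_le_of_eq_unit_mul {p u : ℂ} (hu : ‖u‖ = 1) (hpu : ‖p‖ * u ^ 2 = p) {R : ℝ}
    (hR : 4 * ‖p‖ * u.re ^ 2 ≤ R ^ 2) :
    p.im ^ 2 ≤ p.im * (u * R).re * (u * R).im - p.re * (u * R).im ^ 2 := by
  have hcd : u.im ^ 2 = 1 - u.re ^ 2 := by rw [← sq_norm_sub_sq_re, hu, one_pow]
  have hre : p.re = ‖p‖ * (u.re ^ 2 - u.im ^ 2) := by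
    simpa [sq] using (congrArg re hpu).symm
  have him : p.im = ‖p‖ * (2 * u.re * u.im) := by
    have := congrArg im hpu
    simp only [sq, mul_im, ofReal_re, ofReal_im, mul_re, zero_mul, add_zero] at this
    linarith
  rw [hre, him]
  simp only [re_mul_ofReal, im_mul_ofReal]
  nlinarith [mul_le_mul_of_nonneg_left hR (mul_nonneg (norm_nonneg p) (sq_nonneg u.im))]

theorem eq_mul_re_of_im_conj_mul_eq_zero {u w : ℂ} (hu : ‖u‖ = 1)
    (h : (starRingEnd ℂ u * w).im = 0) : w = u * (starRingEnd ℂ u * w).re := by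
  rw [show ((starRingEnd ℂ u * w).re : ℂ) = starRingEnd ℂ u * w from
    Complex.ext (by simp) (by simp [h]), ← mul_assoc, mul_conj', hu]
  simp

/-- For `z = r w` with `r` real and `|w| = 1`, the equation of the theorem reads
`r² - r * radialCoeff m a b w + ā b = 0`. -/
def radialCoeff (m : ℕ) (a b w : ℂ) : ℂ :=
  starRingEnd ℂ a * w + b * starRingEnd ℂ w + w ^ (2 * m + 1)

theorem radialCoeff_neg (m : ℕ) (a b w : ℂ) :
    radialCoeff m a b (-w) = -radialCoeff m a b w := by
  simp only [radialCoeff, map_neg, Odd.neg_pow (odd_two_mul_add_one m)]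
  ring

theorem continuous_radialCoeff_exp (m : ℕ) (a b : ℂ) :
    Continuous fun θ : ℝ => radialCoeff m a b (exp (θ * I)) := by
  unfold radialCoeff; fun_prop

theorem exists_im_radialCoeff_exp_eq_zero (m : ℕ) (a b : ℂ) :
    ∃ θ : ℝ, (radialCoeff m a b (exp (θ * I))).im = 0 := by
  refine Function.Antiperiodic.exists_eq_zero (c := π)
    (continuous_im.comp (continuous_radialCoeff_exp m a b)) fun θ => ?_
  simp only [ofReal_add, add_mul, exp_add, exp_pi_mul_I, mul_neg_one, radialCoeff_neg, neg_im]

theorem exists_solution_of_hasNonzeroRealRoot (m : ℕ) {a b w : ℂ} (hw : ‖w‖ = 1)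
    (h : HasNonzeroRealRoot (starRingEnd ℂ a * b) (radialCoeff m a b w)) :
    ∃ z : ℂ, z ≠ 0 ∧
      (starRingEnd ℂ z - starRingEnd ℂ a) * (z - b) = z ^ (m + 1) / starRingEnd ℂ z ^ m := by
  obtain ⟨r, hr, hroot⟩ := h
  have hw0 : w ≠ 0 := norm_ne_zero_iff.mp (by simp [hw])
  have hr' : (r : ℂ) ≠ 0 := ofReal_ne_zero.mpr hr
  have hww : w * starRingEnd ℂ w = 1 := by simp [mul_conj', hw]
  have hpow : (w * starRingEnd ℂ w) ^ m = 1 := by rw [hww, one_pow]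
  refine ⟨r * w, mul_ne_zero hr' hw0, ?_⟩
  rw [map_mul, conj_ofReal, eq_div_iff (pow_ne_zero _ (mul_ne_zero hr' (by simpa using hw0)))]
  unfold radialCoeff at hroot
  linear_combination (r * starRingEnd ℂ w) ^ m * hroot
    + (r : ℂ) ^ 2 * (r * starRingEnd ℂ w) ^ m * hww + (r : ℂ) ^ (m + 1) * w ^ (m + 1) * hpow

theorem exists_conj_mul_radialCoeff_im_eq_zero {m : ℕ} (hm : 0 < m) {a b u : ℂ}
    (hab : ‖a + b‖ = 1) (hu : ‖u‖ = 1)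
    (hpu : ‖starRingEnd ℂ a * b‖ * u ^ 2 = starRingEnd ℂ a * b) :
    ∃ θ : ℝ, (starRingEnd ℂ u * radialCoeff m a b (exp (θ * I))).im = 0 ∧
      4 * ‖starRingEnd ℂ a * b‖ * u.re ^ 2
        ≤ (starRingEnd ℂ u * radialCoeff m a b (exp (θ * I))).re ^ 2 := by
  set D := starRingEnd ℂ u * starRingEnd ℂ a - u * starRingEnd ℂ b
  set E := starRingEnd ℂ u * starRingEnd ℂ a + u * starRingEnd ℂ b
  have hnormD : ‖D‖ ^ 2 = 1 - 4 * ‖starRingEnd ℂ a * b‖ * u.re ^ 2 := by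
    have huu : u * starRingEnd ℂ u = 1 := by simp [mul_conj', hu]
    have hab' : (a + b) * starRingEnd ℂ (a + b) = 1 := by rw [mul_conj', hab]; simp
    have hpu' := congrArg (starRingEnd ℂ) hpu
    simp only [map_mul, map_pow, conj_ofReal, conj_conj] at hpu'
    apply ofReal_injective
    push_cast
    rw [← mul_conj', re_eq_add_conj]
    simp only [D, map_sub, map_mul, conj_conj, map_add] at hab' ⊢
    linear_combination (a * starRingEnd ℂ a + b * starRingEnd ℂ b
      - 2 * ‖starRingEnd ℂ a * b‖ * u * starRingEnd ℂ u) * huu + hab'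
      + (starRingEnd ℂ u ^ 2 + 1) * hpu + (u ^ 2 + 1) * hpu'
  obtain ⟨θ, him, hre⟩ := exists_im_eq_zero_and_sq_le_re (n := 2 * m + 1) (by omega)
    (D := D) (by nlinarith [norm_nonneg D, sq_nonneg u.re, norm_nonneg (starRingEnd ℂ a * b)])
    E (lam := starRingEnd ℂ u) (by rwa [norm_conj])
  set w := exp (θ * I)
  set ξ := u * starRingEnd ℂ b * w
  have hD : starRingEnd ℂ u * radialCoeff m a b w
      = D * w + starRingEnd ℂ u * w ^ (2 * m + 1) + (ξ + starRingEnd ℂ ξ) := by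
    simp only [radialCoeff, D, ξ, map_mul, conj_conj]; ring
  have hE : starRingEnd ℂ u * radialCoeff m a b w
      = E * w + starRingEnd ℂ u * w ^ (2 * m + 1) - (ξ - starRingEnd ℂ ξ) := by
    simp only [radialCoeff, E, ξ, map_mul, conj_conj]; ring
  refine ⟨θ, ?_, ?_⟩
  · rw [hD, add_im, add_conj, him]; simp
  · rw [hE, sub_re, sub_conj]; simpa [hnormD] using hre

theorem exists_hasNonzeroRealRoot_of_im_eq_zero {m : ℕ} (hm : 0 < m) {a b : ℂ}
    (hab : ‖a + b‖ = 1) (hp : starRingEnd ℂ a * b ≠ 0) (hq : (starRingEnd ℂ a * b).im = 0) :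
    ∃ θ : ℝ, HasNonzeroRealRoot (starRingEnd ℂ a * b) (radialCoeff m a b (exp (θ * I))) := by
  set p := starRingEnd ℂ a * b
  have hκ : p.re ≠ 0 := fun h => hp (Complex.ext h hq)
  rcases hκ.lt_or_gt with hneg | hpos
  · obtain ⟨θ, hθ⟩ := exists_im_radialCoeff_exp_eq_zero m a b
    exact ⟨θ, hasNonzeroRealRoot_of_im_eq_zero hq hκ hθ
      (by nlinarith [sq_nonneg (radialCoeff m a b (exp (θ * I))).re])⟩
  · have hpr : (p.re : ℂ) = p := Complex.ext (by simp) (by simp [hq])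
    have hnorm : ‖p‖ = p.re := by
      conv_lhs => rw [← hpr]
      rw [norm_real, Real.norm_of_nonneg hpos.le]
    obtain ⟨θ, him, hre⟩ := exists_conj_mul_radialCoeff_im_eq_zero (u := 1) hm hab (by simp)
      (by rw [hnorm, one_pow, mul_one, hpr])
    simp only [map_one, one_mul] at him hre
    rw [one_re, one_pow, mul_one, hnorm] at hre
    exact ⟨θ, hasNonzeroRealRoot_of_im_eq_zero hq hκ him hre⟩

theorem exists_hasNonzeroRealRoot_of_im_ne_zero {m : ℕ} (hm : 0 < m) {a b : ℂ}
    (hab : ‖a + b‖ = 1) (hq : (starRingEnd ℂ a * b).im ≠ 0) :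
    ∃ θ : ℝ, HasNonzeroRealRoot (starRingEnd ℂ a * b) (radialCoeff m a b (exp (θ * I))) := by
  set p := starRingEnd ℂ a * b
  set F := fun θ : ℝ => radialCoeff m a b (exp (θ * I))
  set u := exp ((arg p / 2 : ℝ) * I)
  have hu : ‖u‖ = 1 := norm_exp_ofReal_mul_I _
  have hpu : ‖p‖ * u ^ 2 = p := by
    conv_rhs => rw [← norm_mul_exp_arg_mul_I p]
    rw [← exp_nat_mul]; push_cast; ring_nf
  obtain ⟨θ₀, hθ₀⟩ := exists_im_radialCoeff_exp_eq_zero m a b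
  obtain ⟨θ₁, him, hre⟩ := exists_conj_mul_radialCoeff_im_eq_zero hm hab hu hpu
  have hθ₁ := sq_im_le_of_eq_unit_mul hu hpu hre
  rw [← eq_mul_re_of_im_conj_mul_eq_zero hu him] at hθ₁
  set g := fun θ => p.im * (F θ).re * (F θ).im - p.re * (F θ).im ^ 2
  have hg : Continuous g := by
    have := continuous_radialCoeff_exp m a b; fun_prop
  have hg₀ : g θ₀ = 0 := by
    simp only [g, F, hθ₀, mul_zero, ne_eq, OfNat.ofNat_ne_zero, not_false_eq_true, zero_pow,
      sub_self]
  have hmem : p.im ^ 2 ∈ Set.uIcc (g θ₀) (g θ₁) :=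
    Set.mem_uIcc.mpr (Or.inl ⟨hg₀ ▸ sq_nonneg _, hθ₁⟩)
  obtain ⟨θ, -, hθ⟩ := intermediate_value_uIcc hg.continuousOn hmem
  exact ⟨θ, hasNonzeroRealRoot_of_im_ne_zero hq hθ⟩

/-- Lemma A.1: for any positive integer `m` and nonzero complex `a, b` with
`a + b = -e^{it}` for some real `t`, there is a nonzero solution `z` of
`(conj z - conj a)(z - b) = z^(m+1) / (conj z)^m`. -/
theorem stmt_0 (m : ℕ) (hm : 0 < m) (a b : ℂ) (ha : a ≠ 0) (hb : b ≠ 0)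
    (t : ℝ) (hab : a + b = -Complex.exp (Complex.I * t)) :
    ∃ z : ℂ, z ≠ 0 ∧
      ((starRingEnd ℂ) z - (starRingEnd ℂ) a) * (z - b)
        = z ^ (m + 1) / ((starRingEnd ℂ) z) ^ m := by
  have hab1 : ‖a + b‖ = 1 := by rw [hab, norm_neg, mul_comm, norm_exp_ofReal_mul_I]
  obtain ⟨θ, hθ⟩ :
      ∃ θ : ℝ, HasNonzeroRealRoot (starRingEnd ℂ a * b) (radialCoeff m a b (exp (θ * I))) := by
    rcases eq_or_ne (starRingEnd ℂ a * b).im 0 with hq | hq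
    · exact exists_hasNonzeroRealRoot_of_im_eq_zero hm hab1
        (mul_ne_zero ((map_ne_zero _).mpr ha) hb) hq
    · exact exists_hasNonzeroRealRoot_of_im_ne_zero hm hab1 hq
  exact exists_solution_of_hasNonzeroRealRoot m (norm_exp_ofReal_mul_I θ) hθ
end

section
/- For m = 1 and a = b a real number with -a > 1 (i.e. a < -1), the equation |z - a|^2 = z^3 / |z|^2 has no complex solution z ≠ 0. -/
/-!
Taking norms turns the equation into `‖z‖ = ‖z - a‖ ^ 2`, and since its right-hand side is a
positive real, `0 < z ^ 3`: `z` lies on the ray through a cube root of unity, so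
`re z = ‖z‖` or `re z = -‖z‖ / 2`. With `‖z - a‖ ^ 2 = ‖z‖ ^ 2 - 2 a re z + a ^ 2` either case
is a real quadratic equation in `‖z‖` without positive roots once `a < -1`.
-/

open ComplexOrder

namespace Complex

theorem re_eq_norm_or_two_mul_re_eq_neg_norm_of_pow_three_pos {z : ℂ} (hz : 0 < z ^ 3) :
    z.re = ‖z‖ ∨ 2 * z.re = -‖z‖ := by
  obtain ⟨hre, him⟩ := pos_iff.mp hz
  have hre' : 0 < z.re * (z.re ^ 2 - 3 * z.im ^ 2) := by
    simp only [pow_succ, pow_zero, one_mul, mul_re, mul_im] at hre; nlinarith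
  have him' : z.im * (3 * z.re ^ 2 - z.im ^ 2) = 0 := by
    simp only [pow_succ, pow_zero, one_mul, mul_re, mul_im] at him; linarith
  have hnorm : ‖z‖ = √(z.re ^ 2 + z.im ^ 2) := by
    rw [norm_def, normSq_apply]; ring_nf
  rcases mul_eq_zero.mp him' with him0 | him0
  · left
    have hre_pos : 0 < z.re := by rw [him0] at hre'; nlinarith [sq_nonneg z.re]
    rw [hnorm, him0, zero_pow two_ne_zero, add_zero, Real.sqrt_sq hre_pos.le]
  · right
    have hre_neg : z.re < 0 := by nlinarith [sq_nonneg z.re]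
    rw [hnorm, show z.im ^ 2 = 3 * z.re ^ 2 by linarith,
      show z.re ^ 2 + 3 * z.re ^ 2 = (-2 * z.re) ^ 2 by ring, Real.sqrt_sq (by linarith [hre_neg])]
    ring

theorem sq_norm_sub_ofReal (z : ℂ) (a : ℝ) : ‖z - a‖ ^ 2 = ‖z‖ ^ 2 - 2 * a * z.re + a ^ 2 := by
  simp only [Complex.sq_norm, normSq_apply, sub_re, sub_im, ofReal_re, ofReal_im]
  ring

end Complex

/-- Lemma A.2: for `a < -1` real, the equation `|z - a|² = z³/|z|²`
has no nonzero complex solution. -/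
theorem stmt_1 (a : ℝ) (ha : a < -1) :
    ¬ ∃ z : ℂ, z ≠ 0 ∧
      ((‖z - (a : ℂ)‖ : ℂ)) ^ 2 = z ^ 3 / ((‖z‖ : ℂ)) ^ 2 := by
  rintro ⟨z, hz, h⟩
  have hz0 : 0 < ‖z‖ := norm_pos_iff.mpr hz
  have hcube : z ^ 3 = ((‖z - a‖ ^ 2 * ‖z‖ ^ 2 : ℝ) : ℂ) := by
    rw [eq_div_iff (by exact_mod_cast (pow_pos hz0 2).ne')] at h
    push_cast
    exact h.symm
  have hnorm : ‖z‖ = ‖z - a‖ ^ 2 := by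
    have hcube_norm := congrArg norm hcube
    rw [Complex.norm_pow, Complex.norm_real, Real.norm_of_nonneg (by positivity)] at hcube_norm
    nlinarith [pow_pos hz0 2]
  have hpos : 0 < z ^ 3 := by
    rw [hcube, Complex.zero_lt_real, ← hnorm]
    positivity
  rw [Complex.sq_norm_sub_ofReal] at hnorm
  rcases Complex.re_eq_norm_or_two_mul_re_eq_neg_norm_of_pow_three_pos hpos with hre | hre
  · -- here `‖z‖ = (‖z‖ - a) ^ 2` with `‖z‖ - a > 1`
    nlinarith
  · -- here `‖z‖ ^ 2 + (a - 1) ‖z‖ + a ^ 2 = 0`, whose discriminant `(3a - 1)(-1 - a)` is negative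
    nlinarith [sq_nonneg (2 * ‖z‖ + a - 1)]
end

section
/- Let λ be a complex number with |λ| = 1 and λ ≠ ±1, and let m ≥ 1 be an integer. Then there is no nonzero complex number z such that z^{2m}·(z - λ)/(z - conj(λ)) equals the complex conjugate of (1 + conj(λ)·z)/((1 + λ·z)·z^{2m}). -/
/-!
Write `R = |z|²` and `s = Rⁿ`. Clearing denominators and using `z z̄ = R`, `λ λ̄ = 1`, the
equation becomes `s (z - z̄ + λ̄ R - λ) = z - z̄ + λ R - λ̄`, i.e. `(s - 1) Re λ (R - 1) = 0` and
`2 Im z (s - 1) = Im λ (R + 1)(s + 1)`. If `s = 1` the second equation forces `Im λ = 0`, so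
`λ = ±1`. Otherwise `R ≠ 1`, hence `Re λ = 0` and `|Im λ| = 1`; but `|2 Im z| ≤ 2√R < R + 1` and
`|s - 1| ≤ s + 1`, so the second equation cannot hold.
-/

open Complex ComplexConjugate

theorem ofReal_normSq_pow_mul_eq_of_eq_conj {l z : ℂ} (hl : normSq l = 1) (n : ℕ) (hz0 : z ≠ 0)
    (hz1 : z ≠ conj l) (hz2 : 1 + l * z ≠ 0)
    (h : z ^ n * (z - l) / (z - conj l) = conj ((1 + conj l * z) / ((1 + l * z) * z ^ n))) :
    ((normSq z ^ n : ℝ) : ℂ) * (z - conj z + conj l * normSq z - l)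
      = z - conj z + l * normSq z - conj l := by
  have hll : l * conj l = 1 := by rw [mul_conj, hl, ofReal_one]
  have hzz : z * conj z = normSq z := mul_conj z
  have hzzn : z ^ n * conj z ^ n = (normSq z : ℂ) ^ n := by rw [← mul_pow, hzz]
  have hden : (1 + conj l * conj z) * conj z ^ n ≠ 0 := by
    refine mul_ne_zero ?_ (pow_ne_zero _ ((map_ne_zero _).2 hz0))
    simpa only [map_add, map_one, map_mul] using (map_ne_zero conj).2 hz2
  simp only [map_div₀, map_mul, map_add, map_one, map_pow, conj_conj] at h
  rw [div_eq_div_iff (sub_ne_zero.2 hz1) hden] at h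
  push_cast
  linear_combination h - (z - l) * (1 + conj l * conj z) * hzzn
    - (normSq z : ℂ) ^ n * conj l * hzz + (normSq z : ℂ) ^ n * conj z * hll
    + l * hzz - conj z * hll

theorem re_im_eq_of_ofReal_mul_eq {l z : ℂ} {R s : ℝ}
    (h : (s : ℂ) * (z - conj z + conj l * R - l) = z - conj z + l * R - conj l) :
    (s - 1) * l.re * (R - 1) = 0 ∧ 2 * z.im * (s - 1) = l.im * (R + 1) * (s + 1) := by
  have hre := congrArg re h
  have him := congrArg im h
  simp only [mul_re, ofReal_re, sub_re, add_re, conj_re, sub_self, conj_im, ofReal_im, mul_zero,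
    sub_zero, zero_add, sub_im, add_im, sub_neg_eq_add, mul_im, neg_mul, zero_mul, add_zero] at hre him
  constructor
  · linear_combination hre
  · linear_combination him

theorem sq_two_mul_im_lt {z : ℂ} (hz : normSq z ≠ 1) : (2 * z.im) ^ 2 < (normSq z + 1) ^ 2 := by
  have : 0 < (normSq z - 1) ^ 2 := by positivity
  rw [normSq_apply] at *
  nlinarith [sq_nonneg z.re]

theorem eq_one_or_eq_neg_one_of_im_eq_zero {l : ℂ} (hl : ‖l‖ = 1) (him : l.im = 0) :
    l = 1 ∨ l = -1 := by
  have : l = (l.re : ℂ) := ext rfl (by simp [him])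
  rw [this, norm_real, Real.norm_eq_abs, abs_eq zero_le_one] at hl
  rcases hl with h | h <;> [left; right] <;> rw [this, h] <;> simp

theorem not_exists_pow_mul_div_eq_conj {l : ℂ} (hl : ‖l‖ = 1) (hl1 : l ≠ 1) (hl2 : l ≠ -1)
    (n : ℕ) :
    ¬ ∃ z : ℂ, z ≠ 0 ∧ z ≠ conj l ∧ 1 + l * z ≠ 0 ∧
      z ^ n * (z - l) / (z - conj l) = conj ((1 + conj l * z) / ((1 + l * z) * z ^ n)) := by
  rintro ⟨z, hz0, hz1, hz2, h⟩
  have hnl : normSq l = 1 := by rw [← Complex.sq_norm, hl, one_pow]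
  obtain ⟨hre, him⟩ :=
    re_im_eq_of_ofReal_mul_eq (ofReal_normSq_pow_mul_eq_of_eq_conj hnl n hz0 hz1 hz2 h)
  have hR0 : 0 ≤ normSq z := normSq_nonneg z
  set R := normSq z
  set s := R ^ n with hs_def
  by_cases hs : s = 1
  · have hlim : l.im = 0 := by
      rw [hs] at him
      nlinarith
    rcases eq_one_or_eq_neg_one_of_im_eq_zero hl hlim with h | h
    exacts [hl1 h, hl2 h]
  · have hR : R ≠ 1 := fun hR ↦ hs (by rw [hs_def, hR, one_pow])
    have hlre : l.re = 0 := by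
      simpa [sub_ne_zero.2 hs, sub_ne_zero.2 hR] using hre
    have hlim : l.im ^ 2 = 1 := by rw [← hnl, normSq_apply, hlre]; ring
    have hs0 : 0 ≤ s := pow_nonneg hR0 n
    have hsq : (s - 1) ^ 2 ≤ (s + 1) ^ 2 := by nlinarith
    refine lt_irrefl ((R + 1) ^ 2 * (s + 1) ^ 2) ?_
    calc (R + 1) ^ 2 * (s + 1) ^ 2 = (2 * z.im) ^ 2 * (s - 1) ^ 2 := by
          linear_combination (-(2 * z.im * (s - 1) + l.im * (R + 1) * (s + 1))) * him
            - (R + 1) ^ 2 * (s + 1) ^ 2 * hlim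
      _ ≤ (2 * z.im) ^ 2 * (s + 1) ^ 2 := by gcongr
      _ < (R + 1) ^ 2 * (s + 1) ^ 2 :=
          mul_lt_mul_of_pos_right (sq_two_mul_im_lt hR) (pow_pos (by linarith) 2)

theorem stmt_3_general (l : ℂ) (hl : ‖l‖ = 1) (hl1 : l ≠ 1) (hl2 : l ≠ -1)
    (m : ℕ) :
    ¬ ∃ z : ℂ, z ≠ 0 ∧ z ≠ (starRingEnd ℂ) l ∧ 1 + l * z ≠ 0 ∧
      z ^ (2 * m) * (z - l) / (z - (starRingEnd ℂ) l)
        = (starRingEnd ℂ) ((1 + (starRingEnd ℂ) l * z) / ((1 + l * z) * z ^ (2 * m))) :=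
  not_exists_pow_mul_div_eq_conj hl hl1 hl2 (2 * m)

/-- Regularity of the generalized Meeks Möbius strip: for `|λ| = 1`, `λ ≠ ±1`,
`m ≥ 1`, there is no nonzero `z` (avoiding the poles `z = conj λ`, `z = -1/λ`)
with `z^{2m}(z-λ)/(z-conj λ) = conj((1 + conj λ · z)/((1 + λz) z^{2m}))`. -/
theorem stmt_3 (l : ℂ) (hl : ‖l‖ = 1) (hl1 : l ≠ 1) (hl2 : l ≠ -1)
    (m : ℕ) (hm : 1 ≤ m) :
    ¬ ∃ z : ℂ, z ≠ 0 ∧ z ≠ (starRingEnd ℂ) l ∧ 1 + l * z ≠ 0 ∧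
      z ^ (2 * m) * (z - l) / (z - (starRingEnd ℂ) l)
        = (starRingEnd ℂ) ((1 + (starRingEnd ℂ) l * z) / ((1 + l * z) * z ^ (2 * m))) :=
  stmt_3_general l hl hl1 hl2 m
end

section
/- There is no z ∈ ℂ \ {0} such that z^{2p-1}·e^{(1/2)(z - 1/z)} equals the complex conjugate of (-1/z^{2p-1})·e^{(1/2)(z - 1/z)}, for any positive integer p. -/
/-!
Taking norms, `|z|^n ‖e^w‖ = |z|^{-n} ‖e^w‖` since `‖e^{conj w}‖ = ‖e^w‖`, so `|z| = 1`.
On the unit circle `conj z = z⁻¹`, hence `w = (z - 1/z)/2 = i Im z` satisfies `conj w = -w` and the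
equation becomes `e^w = -e^{-w}`, i.e. `e^{2 i Im z} = -1`. This is impossible because
`|2 Im z| ≤ 2 < π`.
-/

open Complex ComplexConjugate

lemma Real.eq_one_of_pow_eq_inv_pow {x : ℝ} (hx : 0 < x) {n : ℕ} (hn : n ≠ 0)
    (h : x ^ n = (x ^ n)⁻¹) : x = 1 := by
  have hsq : x ^ (n * 2) = 1 := by
    rw [pow_mul, sq]
    nth_rewrite 2 [h]
    exact mul_inv_cancel₀ (by positivity)
  exact (pow_eq_one_iff_of_nonneg hx.le (by omega)).mp hsq

lemma Complex.exp_two_mul_ofReal_mul_I_ne_neg_one {y : ℝ} (hy : |y| ≤ 1) :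
    exp (2 * y * I) ≠ -1 := by
  intro h
  have hcos : Real.cos (2 * y) = -1 := by
    rw [← exp_ofReal_mul_I_re]
    push_cast
    simp [h]
  have hpos := Real.cos_pos_of_le_one hy
  rw [Real.cos_two_mul] at hcos
  nlinarith

variable {n : ℕ} {z w : ℂ}

lemma Complex.norm_eq_one_of_pow_mul_exp_eq_conj (hn : n ≠ 0) (hz : z ≠ 0)
    (h : z ^ n * exp w = conj (-1 / z ^ n * exp w)) : ‖z‖ = 1 := by
  have hnorm := congrArg (‖·‖) h
  simp only [norm_conj, norm_mul, norm_div, norm_neg, norm_one, norm_pow] at hnorm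
  have hpow : ‖z‖ ^ n = (‖z‖ ^ n)⁻¹ := by
    rw [← one_div]
    exact mul_right_cancel₀ (norm_ne_zero_iff.mpr (exp_ne_zero w)) hnorm
  exact Real.eq_one_of_pow_eq_inv_pow (norm_pos_iff.mpr hz) hn hpow

lemma Complex.exp_sub_one_div_eq_neg_one (hz : ‖z‖ = 1)
    (h : z ^ n * exp ((z - 1 / z) / 2) = conj (-1 / z ^ n * exp ((z - 1 / z) / 2))) :
    exp (z - 1 / z) = -1 := by
  have hconj : conj z = z⁻¹ := (inv_eq_conj hz).symm
  have hw : conj ((z - 1 / z) / 2) = -((z - 1 / z) / 2) := by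
    simp only [map_div₀, map_sub, one_div, map_inv₀, hconj, conj_ofNat, inv_inv]
    ring
  rw [map_mul, ← exp_conj, hw, map_div₀, map_neg, map_one, map_pow, hconj, inv_pow,
    div_inv_eq_mul] at h
  have hexp : exp ((z - 1 / z) / 2) = -exp (-((z - 1 / z) / 2)) :=
    mul_left_cancel₀ (pow_ne_zero n (norm_ne_zero_iff.mp (hz ▸ one_ne_zero))) (by rw [h]; ring)
  calc exp (z - 1 / z) = exp ((z - 1 / z) / 2) * exp ((z - 1 / z) / 2) := by
        rw [← exp_add]; ring_nf
    _ = -1 := by nth_rewrite 1 [hexp]; rw [neg_mul, ← exp_add, neg_add_cancel, exp_zero]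

/-- Regularity of Example 5.2: for any positive integer `p`, there is no
`z ∈ ℂ \ {0}` with `z^{2p-1}·e^{(z-1/z)/2} = conj((-1/z^{2p-1})·e^{(z-1/z)/2})`. -/
theorem stmt_5 (p : ℕ) (hp : 0 < p) :
    ¬ ∃ z : ℂ, z ≠ 0 ∧
      z ^ (2 * p - 1) * Complex.exp ((z - 1 / z) / 2)
        = (starRingEnd ℂ) ((-1 / z ^ (2 * p - 1)) * Complex.exp ((z - 1 / z) / 2)) := by
  rintro ⟨z, hz, h⟩
  have hnorm : ‖z‖ = 1 := norm_eq_one_of_pow_mul_exp_eq_conj (by omega) hz h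
  have hsub : z - 1 / z = 2 * (z.im : ℂ) * I := by
    rw [one_div, inv_eq_conj hnorm, sub_conj]; push_cast; ring
  have him : |z.im| ≤ 1 := hnorm ▸ abs_im_le_norm z
  exact exp_two_mul_ofReal_mul_I_ne_neg_one him (hsub ▸ exp_sub_one_div_eq_neg_one hnorm h)
end
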